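/- Let 0 ≤ φ ≤ 1/4, M = P^φ, H = P·M^{−4}, Q = P·M^{−1}, let d, e be positive integers and π a prime with π ≤ R. Then for every ε > 0 there exist positive numbers η and C such that, whenever P is sufficiently large and 1 ≤ R ≤ P^η, one has Υ_{d,e,π}(P,R;φ) ≤ C·P^ε·∫₀¹ |F_{d,e}(α)² g(α;2Q/e,R)⁸| dα. -/

import Mathlib

open Finset MeasureTheory

/-- `e(x) = e^{2πix}`. -/
noncomputable def expi (x : ℝ) : ℂ := Complex.exp (2 * Real.pi * Complex.I * x)

-- `𝒜(P,R)`: natural numbers `1 ≤ n ≤ P` all of whose prime divisors are at most `R`.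
open Classical in
noncomputable def smoothA (P R : ℝ) : Finset ℕ :=
  (Finset.Icc 1 ⌊P⌋₊).filter fun n => ∀ p : ℕ, p.Prime → p ∣ n → (p : ℝ) ≤ R

/-- The smooth Weyl sum `g(α;P,R)`. -/
noncomputable def g (α P R : ℝ) : ℂ := ∑ x ∈ smoothA P R, expi (α * (x : ℝ) ^ 4)

/-- `Δ` is an admissible exponent for `t`. -/
def IsAdmissible (t Δ : ℝ) : Prop :=
  ∃ η C : ℝ, 0 < η ∧ 0 < C ∧ ∃ P₀ : ℝ, ∀ P R : ℝ, P₀ ≤ P → 1 ≤ R → R ≤ P ^ η →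
    (∫ α in (0:ℝ)..1, ‖g α P R‖ ^ t) ≤ C * P ^ (t - 4 + Δ)


-- `ℬ(L,π,R)`: smooth numbers `n ∈ 𝒜(Lπ,R)` with `n > L`, `π ∣ n`, and all prime
-- divisors of `n` at least `π`.
open Classical in
noncomputable def calB (L : ℝ) (π : ℕ) (R : ℝ) : Finset ℕ :=
  (smoothA (L * π) R).filter fun n =>
    L < (n : ℝ) ∧ π ∣ n ∧ ∀ p : ℕ, p.Prime → p ∣ n → π ≤ p

-- The exponential sum `F̃_{d,e}(α;π)` of (3.1).
open Classical in
noncomputable def Ftilde (d e : ℕ) (P M R : ℝ) (π : ℕ) (α : ℝ) : ℂ :=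
  ∑ u ∈ calB (M / d) π R, ∑ x ∈ smoothA (P / (d * e)) R, ∑ y ∈ smoothA (P / (d * e)) R,
    if Nat.gcd x u = 1 ∧ Nat.gcd y u = 1 ∧ x ≡ y [MOD u ^ 4] ∧ y < x then
      expi (α * ((x : ℝ) ^ 4 - (y : ℝ) ^ 4) / (u : ℝ) ^ 4)
    else 0

/-- The exponential sum `F_{d,e}(α)` of (3.2). -/
noncomputable def Fde (d e : ℕ) (P M H R : ℝ) (α : ℝ) : ℂ :=
  ∑ z ∈ Finset.Icc 1 ⌊2 * P / (d * e)⌋₊, ∑ h ∈ Finset.Icc 1 ⌊H * d ^ 3 / e⌋₊,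
    ∑ u ∈ Finset.Ioc ⌊M / d⌋₊ ⌊M * R / d⌋₊,
      expi (8 * α * (h : ℝ) * (z : ℝ) * ((z : ℝ) ^ 2 + (h : ℝ) ^ 2 * (u : ℝ) ^ 8))

/-- The maximal smooth Weyl sum `f̃(α;P,M,R)` of (3.3). -/
noncomputable def ftilde (α P M R : ℝ) : ℝ :=
  ⨆ m : ℕ, if M < (m : ℝ) then ‖g α (P / m) R‖ else 0

/-- The mean value `Υ_{d,e,π}(P,R;φ)` of (3.4), with `M = P^φ`. -/
noncomputable def Upsilon (d e π : ℕ) (P M R : ℝ) : ℝ :=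
  ∫ α in (0:ℝ)..1,
    ‖Ftilde d e P M R π α‖ ^ 2 * (ftilde α (P / (d * e)) (M / d) π) ^ 8

/-!
Write `x = y + u⁴h` and `z = x + y`. Then `(u, x, y) ↦ (z, h, u)` is injective and multiplies
the frequency `(x⁴ - y⁴)/u⁴` of `F̃` by `16`, turning it into the frequency `8hz(z² + h²u⁸)`
of `F`; likewise `n ↦ 2n` maps the `π`-smooth numbers up to `w ≤ Q/e` into `𝒜(2Q/e, R)` and
multiplies `n⁴` by `16`. By orthogonality `∫₀¹ |∑ e(αnᵢ)|²` counts the solutions of `nᵢ = nⱼ`,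
and such an injection can only increase that count. Finally the maximum defining `f̃` is
attained at one of the `π`-smooth lengths `w ≤ Q/e`, so `f̃⁸ ≤ ∑_w |g(α; w, π)|⁸`, and there
are at most `(log₂ P + 1)^(π+1) ≤ P^ε` such `w` once `P` is large.
-/

open Filter Asymptotics

lemma expi_add (x y : ℝ) : expi (x + y) = expi x * expi y := by
  rw [expi, expi, expi, ← Complex.exp_add]
  push_cast
  ring_nf

lemma conj_expi (x : ℝ) : starRingEnd ℂ (expi x) = expi (-x) := by
  rw [expi, expi, ← Complex.exp_conj]
  simp only [map_mul, Complex.conj_I, Complex.conj_ofReal, map_ofNat]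
  push_cast
  ring_nf

lemma re_expi (x : ℝ) : (expi x).re = Real.cos (2 * Real.pi * x) := by
  rw [expi, Complex.exp_re]
  simp

lemma continuous_expi : Continuous expi := by
  unfold expi
  fun_prop

noncomputable def expSum {ι : Type*} (A : Finset ι) (f : ι → ℕ) (α : ℝ) : ℂ :=
  ∑ i ∈ A, expi (α * f i)

def collisionCount {ι : Type*} (A : Finset ι) (f : ι → ℕ) : ℕ :=
  #{p ∈ A ×ˢ A | f p.1 = f p.2}

section ExpSum

variable {ι κ : Type*}

lemma continuous_expSum (A : Finset ι) (f : ι → ℕ) : Continuous (expSum A f) :=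
  continuous_finsetSum _ fun _ _ => continuous_expi.comp (by fun_prop)

lemma expSum_mul (A : Finset ι) (B : Finset κ) (f : ι → ℕ) (g : κ → ℕ) (α : ℝ) :
    expSum A f α * expSum B g α = expSum (A ×ˢ B) (fun p => f p.1 + g p.2) α := by
  rw [expSum, expSum, expSum, sum_mul_sum, sum_product]
  refine sum_congr rfl fun i _ => sum_congr rfl fun j _ => ?_
  rw [← expi_add]
  push_cast
  ring_nf

lemma integral_cos_two_pi_int_mul (k : ℤ) :
    ∫ α in (0 : ℝ)..1, Real.cos (2 * Real.pi * k * α) = if k = 0 then 1 else 0 := by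
  split_ifs with hk
  · simp [hk]
  have hc : 2 * Real.pi * k ≠ 0 := by positivity
  rw [intervalIntegral.integral_comp_mul_left Real.cos hc, integral_cos, mul_one,
    show 2 * Real.pi * k = ((2 * k : ℤ) : ℝ) * Real.pi by push_cast; ring, Real.sin_int_mul_pi]
  simp

lemma sq_norm_expSum (A : Finset ι) (f : ι → ℕ) (α : ℝ) :
    ‖expSum A f α‖ ^ 2 =
      ∑ p ∈ A ×ˢ A, Real.cos (2 * Real.pi * ((f p.1 : ℤ) - f p.2 : ℤ) * α) := by
  rw [← Complex.ofReal_re (‖_‖ ^ 2), Complex.ofReal_pow, ← Complex.mul_conj', expSum, map_sum,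
    sum_mul_sum, ← sum_product', Complex.re_sum]
  refine sum_congr rfl fun p _ => ?_
  rw [conj_expi, ← expi_add, re_expi]
  push_cast
  ring_nf

/-- Orthogonality of the characters `α ↦ e(αn)` on `[0, 1]`. -/
lemma integral_sq_norm_expSum (A : Finset ι) (f : ι → ℕ) :
    ∫ α in (0 : ℝ)..1, ‖expSum A f α‖ ^ 2 = collisionCount A f := by
  simp_rw [sq_norm_expSum]
  rw [intervalIntegral.integral_finsetSum fun p _ =>
    (Continuous.intervalIntegrable (by fun_prop) _ _)]
  simp_rw [integral_cos_two_pi_int_mul, sub_eq_zero, Nat.cast_inj]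
  rw [sum_boole, collisionCount]

end ExpSum

structure ScaledEmbedding {ι κ : Type*} (c : ℕ) (A : Finset ι) (f : ι → ℕ) (B : Finset κ)
    (g : κ → ℕ) (φ : ι → κ) : Prop where
  mapsTo : Set.MapsTo φ A B
  injOn : Set.InjOn φ A
  map_freq : ∀ i ∈ A, g (φ i) = c * f i

namespace ScaledEmbedding

variable {ι ι' κ κ' : Type*} {c : ℕ} {A : Finset ι} {A' : Finset ι'} {B : Finset κ}
  {B' : Finset κ'} {f : ι → ℕ} {f' : ι' → ℕ} {g : κ → ℕ} {g' : κ' → ℕ} {φ : ι → κ} {ψ : ι' → κ'}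

lemma collisionCount_le (h : ScaledEmbedding c A f B g φ) :
    collisionCount A f ≤ collisionCount B g := by
  refine card_le_card_of_injOn (Prod.map φ φ) (fun p hp => ?_) fun p hp q hq hpq => ?_
  · simp only [mem_coe, mem_filter, mem_product] at hp ⊢
    obtain ⟨⟨h₁, h₂⟩, heq⟩ := hp
    exact ⟨⟨h.mapsTo h₁, h.mapsTo h₂⟩, by simp [h.map_freq _ h₁, h.map_freq _ h₂, heq]⟩
  · simp only [mem_coe, mem_filter, mem_product] at hp hq
    obtain ⟨h₁, h₂⟩ := Prod.mk.inj hpq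
    exact Prod.ext (h.injOn hp.1.1 hq.1.1 h₁) (h.injOn hp.1.2 hq.1.2 h₂)

lemma integral_sq_norm_expSum_le (h : ScaledEmbedding c A f B g φ) :
    ∫ α in (0 : ℝ)..1, ‖expSum A f α‖ ^ 2 ≤ ∫ α in (0 : ℝ)..1, ‖expSum B g α‖ ^ 2 := by
  rw [integral_sq_norm_expSum, integral_sq_norm_expSum]
  exact_mod_cast h.collisionCount_le

lemma prod (h : ScaledEmbedding c A f B g φ) (h' : ScaledEmbedding c A' f' B' g' ψ) :
    ScaledEmbedding c (A ×ˢ A') (fun p => f p.1 + f' p.2) (B ×ˢ B') (fun p => g p.1 + g' p.2)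
      (Prod.map φ ψ) where
  mapsTo p hp := by
    rw [coe_product] at hp ⊢
    exact ⟨h.mapsTo hp.1, h'.mapsTo hp.2⟩
  injOn p hp q hq hpq := by
    rw [coe_product] at hp hq
    obtain ⟨h₁, h₂⟩ := Prod.mk.inj hpq
    exact Prod.ext (h.injOn hp.1 hq.1 h₁) (h'.injOn hp.2 hq.2 h₂)
  map_freq p hp := by
    rw [mem_product] at hp
    simp only [Prod.map_fst, Prod.map_snd, h.map_freq _ hp.1, h'.map_freq _ hp.2, mul_add]

end ScaledEmbedding

section SmoothNumbers

variable {P R : ℝ} {n : ℕ}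

lemma mem_smoothA :
    n ∈ smoothA P R ↔ 1 ≤ n ∧ n ≤ ⌊P⌋₊ ∧ ∀ p : ℕ, p.Prime → p ∣ n → (p : ℝ) ≤ R := by
  simp [smoothA, and_assoc]

lemma le_of_mem_smoothA (hn : n ∈ smoothA P R) : (n : ℝ) ≤ P :=
  (Nat.le_floor_iff' (by grind [mem_smoothA])).1 (mem_smoothA.1 hn).2.1

lemma mem_calB {L : ℝ} {π : ℕ} :
    n ∈ calB L π R ↔
      n ∈ smoothA (L * π) R ∧ L < n ∧ π ∣ n ∧ ∀ p : ℕ, p.Prime → p ∣ n → π ≤ p := by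
  simp [calB]

lemma factorization_lt_of_mem_smoothA (hn : n ∈ smoothA P R) (p : ℕ) :
    n.factorization p < Nat.log 2 ⌊P⌋₊ + 1 := by
  obtain ⟨hn1, hnP, -⟩ := mem_smoothA.1 hn
  by_cases hp : p.Prime
  · rw [Nat.factorization_def n hp, Nat.lt_succ_iff]
    calc padicValNat p n ≤ Nat.log p n := padicValNat_le_nat_log n
      _ ≤ Nat.log 2 n := Nat.log_anti_left one_lt_two hp.two_le
      _ ≤ Nat.log 2 ⌊P⌋₊ := Nat.log_mono_right hnP
  · simp [Nat.factorization_eq_zero_of_not_prime n hp]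

lemma factorization_eq_zero_of_mem_smoothA {k : ℕ} (hn : n ∈ smoothA P k) {p : ℕ} (hp : k < p) :
    n.factorization p = 0 := by
  rw [Nat.factorization_eq_zero_iff]
  by_contra! h
  exact hp.not_ge (by exact_mod_cast (mem_smoothA.1 hn).2.2 p h.1 h.2.1)

lemma card_smoothA_le (k : ℕ) :
    #(smoothA P k) ≤ (Nat.log 2 ⌊P⌋₊ + 1) ^ (k + 1) := by
  have hpos {m : ℕ} (hm : m ∈ smoothA P k) : m ≠ 0 := by grind [mem_smoothA]
  calc #(smoothA P k)
      ≤ #(Fintype.piFinset fun _ : Fin (k + 1) => range (Nat.log 2 ⌊P⌋₊ + 1)) := by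
        refine card_le_card_of_injOn (fun m (i : Fin (k + 1)) => m.factorization i)
          (fun m hm => ?_) fun m hm m' hm' hmm' => ?_
        · simpa using fun i : Fin (k + 1) => factorization_lt_of_mem_smoothA hm i
        · refine Nat.factorization_inj (hpos hm) (hpos hm') (Finsupp.ext fun p => ?_)
          rcases le_or_gt p k with hp | hp
          · exact congrFun hmm' ⟨p, Nat.lt_succ_of_le hp⟩
          · rw [factorization_eq_zero_of_mem_smoothA hm hp,
              factorization_eq_zero_of_mem_smoothA hm' hp]
    _ = (Nat.log 2 ⌊P⌋₊ + 1) ^ (k + 1) := by simp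

end SmoothNumbers

lemma eventually_natLog_floor_add_one_le_rpow {δ : ℝ} (hδ : 0 < δ) :
    ∀ᶠ P : ℝ in atTop, (Nat.log 2 ⌊P⌋₊ : ℝ) + 1 ≤ P ^ δ := by
  have hlogb : (fun P => Real.logb 2 P + 1) =o[atTop] fun P => P ^ δ :=
    (((isLittleO_log_rpow_atTop hδ).const_mul_left (Real.log 2)⁻¹).congr_left
      fun P => by rw [Real.logb, div_eq_inv_mul]).add
      ((isLittleO_one_left_iff ℝ).2 (tendsto_norm_atTop_atTop.comp (tendsto_rpow_atTop hδ)))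
  filter_upwards [hlogb.def one_pos, eventually_ge_atTop 1] with P hP hP1
  have hfloor : (1 : ℝ) ≤ ⌊P⌋₊ := by exact_mod_cast Nat.one_le_floor_iff P |>.2 hP1
  have hnat : (Nat.log 2 ⌊P⌋₊ : ℝ) ≤ Real.logb 2 P := by
    have := Real.natLog_le_logb ⌊P⌋₊ 2
    push_cast at this
    exact this.trans (Real.logb_le_logb_of_le one_lt_two (by linarith)
      (Nat.floor_le (by linarith)))
  have hlog : Real.logb 2 P + 1 ≤ P ^ δ := by
    simpa [abs_of_nonneg (Real.rpow_nonneg (zero_le_one.trans hP1) δ)] using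
      (le_abs_self _).trans hP
  linarith

lemma eventually_card_smoothA_le_rpow (k : ℕ) {ε : ℝ} (hε : 0 < ε) :
    ∀ᶠ P : ℝ in atTop, ∀ X ≤ P, (#(smoothA X k) : ℝ) ≤ P ^ ε := by
  filter_upwards [eventually_natLog_floor_add_one_le_rpow (by positivity : 0 < ε / (k + 1)),
    eventually_ge_atTop 0] with P hP hP0 X hX
  calc (#(smoothA X k) : ℝ) ≤ ((Nat.log 2 ⌊X⌋₊ : ℝ) + 1) ^ (k + 1) := by
        exact_mod_cast card_smoothA_le k
    _ ≤ ((Nat.log 2 ⌊P⌋₊ : ℝ) + 1) ^ (k + 1) := by gcongr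
    _ ≤ (P ^ (ε / (k + 1))) ^ (k + 1) := by gcongr
    _ = P ^ ε := by
        rw [← Real.rpow_mul_natCast hP0]
        push_cast
        field_simp

section WeylSums

variable {X Y R : ℝ}

lemma g_eq_expSum (α X R : ℝ) : g α X R = expSum (smoothA X R) (· ^ 4) α := by
  simp [g, expSum]

lemma continuous_g (X R : ℝ) : Continuous fun α => g α X R := by
  simpa only [g_eq_expSum] using continuous_expSum _ _

lemma smoothA_mono (h : X ≤ Y) : smoothA X R ⊆ smoothA Y R := fun n hn => by
  obtain ⟨hn1, hnX, hnR⟩ := mem_smoothA.1 hn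
  exact mem_smoothA.2 ⟨hn1, hnX.trans (Nat.floor_le_floor h), hnR⟩

lemma smoothA_eq_smoothA_max' (h : (smoothA X R).Nonempty) :
    smoothA X R = smoothA ((smoothA X R).max' h : ℕ) R := by
  ext n
  have hmax := mem_smoothA.1 ((smoothA X R).max'_mem h)
  rw [mem_smoothA, mem_smoothA, Nat.floor_natCast]
  constructor
  · intro hn
    exact ⟨hn.1, (smoothA X R).le_max' n (mem_smoothA.2 hn), hn.2.2⟩
  · rintro ⟨hn1, hn, hnR⟩
    exact ⟨hn1, hn.trans hmax.2.1, hnR⟩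

lemma scaledEmbedding_two_mul_smoothA {k : ℕ} (hk : 2 ≤ k) (hkR : (k : ℝ) ≤ R)
    (hXY : 2 * X ≤ Y) :
    ScaledEmbedding 16 (smoothA X k) (· ^ 4) (smoothA Y R) (· ^ 4) (2 * ·) where
  mapsTo n hn := by
    obtain ⟨hn1, -, hnk⟩ := mem_smoothA.1 hn
    refine mem_smoothA.2 ⟨by dsimp only; omega, Nat.le_floor ?_, fun p hp hpn => ?_⟩
    · push_cast
      linarith [le_of_mem_smoothA hn]
    · refine le_trans ?_ hkR
      rcases (Nat.Prime.dvd_mul hp).1 hpn with h2 | hn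
      · exact_mod_cast (Nat.le_of_dvd two_pos h2).trans hk
      · exact hnk p hp hn
  injOn a _ b _ h := by simpa using h
  map_freq n _ := by ring

lemma ftilde_nonneg (α P M R : ℝ) : 0 ≤ ftilde α P M R :=
  Real.iSup_nonneg fun _ => by split_ifs <;> positivity

lemma norm_g_pow_eight_le_sum {P M : ℝ} {m : ℕ} (α : ℝ) (hP : 0 ≤ P) (hM : 0 < M)
    (hm : M < m) :
    ‖g α (P / m) R‖ ^ 8 ≤ ∑ w ∈ smoothA (P / M) R, ‖g α w R‖ ^ 8 := by
  by_cases h : (smoothA (P / m) R).Nonempty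
  · rw [g, smoothA_eq_smoothA_max' h, ← g]
    refine single_le_sum (f := fun w : ℕ => ‖g α w R‖ ^ 8) (fun w _ => by positivity)
      (smoothA_mono ?_ ((smoothA _ R).max'_mem h))
    gcongr
  · rw [g, not_nonempty_iff_eq_empty.1 h, sum_empty, norm_zero, zero_pow (by norm_num)]
    exact sum_nonneg fun _ _ => by positivity

lemma ftilde_pow_eight_le (α : ℝ) {P M : ℝ} (hP : 0 ≤ P) (hM : 0 < M) :
    ftilde α P M R ^ 8 ≤ ∑ w ∈ smoothA (P / M) R, ‖g α w R‖ ^ 8 := by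
  set T := ∑ w ∈ smoothA (P / M) R, ‖g α w R‖ ^ 8
  have hT : 0 ≤ T := sum_nonneg fun _ _ => by positivity
  have hroot : (T ^ ((8 : ℕ) : ℝ)⁻¹) ^ 8 = T := Real.rpow_inv_natCast_pow hT (by norm_num)
  calc ftilde α P M R ^ 8 ≤ (T ^ ((8 : ℕ) : ℝ)⁻¹) ^ 8 := by
        refine pow_le_pow_left₀ (ftilde_nonneg _ _ _ _) (ciSup_le fun m => ?_) 8
        split_ifs with hm
        · refine le_of_pow_le_pow_left₀ (n := 8) (by norm_num) (Real.rpow_nonneg hT _) ?_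
          rw [hroot]
          exact norm_g_pow_eight_le_sum α hP hM hm
        · exact Real.rpow_nonneg hT _
    _ = T := hroot

end WeylSums

section Embedding

open Classical in
noncomputable def ftildeIndex (d e : ℕ) (P M R : ℝ) (π : ℕ) : Finset (ℕ × ℕ × ℕ) :=
  (calB (M / d) π R ×ˢ (smoothA (P / (d * e)) R ×ˢ smoothA (P / (d * e)) R)).filter
    fun s => Nat.gcd s.2.1 s.1 = 1 ∧ Nat.gcd s.2.2 s.1 = 1 ∧
      s.2.1 ≡ s.2.2 [MOD s.1 ^ 4] ∧ s.2.2 < s.2.1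

/-- Exact on `ftildeIndex`, where `y < x` and `u⁴ ∣ x - y`; elsewhere `ℕ`-subtraction and
division truncate. -/
def ftildeFreq (s : ℕ × ℕ × ℕ) : ℕ := (s.2.1 ^ 4 - s.2.2 ^ 4) / s.1 ^ 4

noncomputable def fdeIndex (d e : ℕ) (P M H R : ℝ) : Finset (ℕ × ℕ × ℕ) :=
  Icc 1 ⌊2 * P / (d * e)⌋₊ ×ˢ (Icc 1 ⌊H * d ^ 3 / e⌋₊ ×ˢ Ioc ⌊M / d⌋₊ ⌊M * R / d⌋₊)

def fdeFreq (t : ℕ × ℕ × ℕ) : ℕ := 8 * t.2.1 * t.1 * (t.1 ^ 2 + t.2.1 ^ 2 * t.2.2 ^ 8)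

def ftildeToFde (s : ℕ × ℕ × ℕ) : ℕ × ℕ × ℕ :=
  (s.2.1 + s.2.2, (s.2.1 - s.2.2) / s.1 ^ 4, s.1)

variable {d e π : ℕ} {P M H R : ℝ} {s : ℕ × ℕ × ℕ}

lemma exists_eq_of_mem_ftildeIndex (hs : s ∈ ftildeIndex d e P M R π) :
    ∃ u y k, 0 < u ∧ 0 < k ∧ s = (u, y + u ^ 4 * k, y) := by
  obtain ⟨u, x, y⟩ := s
  simp only [ftildeIndex, mem_filter, mem_product] at hs
  obtain ⟨⟨hu, -, -⟩, -, -, hxy, hyx⟩ := hs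
  obtain ⟨k, hk⟩ := (Nat.modEq_iff_dvd' hyx.le).1 hxy.symm
  obtain rfl : x = y + u ^ 4 * k := by omega
  refine ⟨u, y, k, (mem_smoothA.1 (mem_calB.1 hu).1).1, Nat.pos_of_ne_zero ?_, rfl⟩
  rintro rfl
  omega

lemma ftildeToFde_apply {u : ℕ} (hu : 0 < u) (y k : ℕ) :
    ftildeToFde (u, y + u ^ 4 * k, y) = (2 * y + u ^ 4 * k, k, u) := by
  simp only [ftildeToFde, Nat.add_sub_cancel_left, Nat.mul_div_cancel_left _ (by positivity :
    0 < u ^ 4), Prod.mk.injEq, and_true]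
  ring

lemma ftildeFreq_apply {u : ℕ} (hu : 0 < u) (y k : ℕ) :
    ftildeFreq (u, y + u ^ 4 * k, y) =
      k * ((2 * y + u ^ 4 * k) * ((y + u ^ 4 * k) ^ 2 + y ^ 2)) := by
  rw [ftildeFreq, show (y + u ^ 4 * k) ^ 4 =
      y ^ 4 + u ^ 4 * (k * ((2 * y + u ^ 4 * k) * ((y + u ^ 4 * k) ^ 2 + y ^ 2))) by ring,
    Nat.add_sub_cancel_left, Nat.mul_div_cancel_left _ (by positivity)]

/-- Since `z² + (x - y)² = 2(x² + y²)` for `z = x + y`, the frequency `8hz(z² + h²u⁸)` of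
`F` is `16 (x⁴ - y⁴) / u⁴`. -/
lemma fdeFreq_ftildeToFde {u : ℕ} (hu : 0 < u) (y k : ℕ) :
    fdeFreq (ftildeToFde (u, y + u ^ 4 * k, y)) = 16 * ftildeFreq (u, y + u ^ 4 * k, y) := by
  rw [ftildeToFde_apply hu, ftildeFreq_apply hu, fdeFreq]
  ring

lemma ftildeToFde_mem_fdeIndex (hd : 0 < d) (hM : 0 < M) (hπR : (π : ℝ) ≤ R)
    (hH : P / M ^ 4 ≤ H) (hs : s ∈ ftildeIndex d e P M R π) :
    ftildeToFde s ∈ fdeIndex d e P M H R := by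
  obtain ⟨u, y, k, hu, hk, rfl⟩ := exists_eq_of_mem_ftildeIndex hs
  simp only [ftildeIndex, mem_filter, mem_product] at hs
  obtain ⟨⟨huB, hx, hy⟩, -⟩ := hs
  obtain ⟨huA, huM, -⟩ := mem_calB.1 huB
  have hxP := le_of_mem_smoothA hx
  have hyP := le_of_mem_smoothA hy
  push_cast at hxP
  have hMu : (M / d) ^ 4 ≤ (u : ℝ) ^ 4 := by gcongr
  rw [ftildeToFde_apply hu, fdeIndex, mem_product, mem_product, mem_Icc, mem_Icc, mem_Ioc]
  have huk : 0 < u ^ 4 * k := by positivity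
  refine ⟨⟨by omega, Nat.le_floor ?_⟩, ⟨hk, Nat.le_floor ?_⟩,
    (Nat.floor_lt (by positivity)).2 huM, Nat.le_floor ?_⟩
  · push_cast
    rw [mul_div_assoc]
    linarith
  · calc (k : ℝ) ≤ P / (d * e) / (M / d) ^ 4 := by
          rw [le_div_iff₀ (by positivity)]
          linarith [mul_le_mul_of_nonneg_left hMu k.cast_nonneg]
      _ = P / M ^ 4 * d ^ 3 / e := by field_simp
      _ ≤ H * d ^ 3 / e := by gcongr
  · calc (u : ℝ) ≤ M / d * π := le_of_mem_smoothA huA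
      _ ≤ M / d * R := by gcongr
      _ = M * R / d := by ring

lemma scaledEmbedding_ftildeToFde (hd : 0 < d) (hM : 0 < M) (hπR : (π : ℝ) ≤ R)
    (hH : P / M ^ 4 ≤ H) :
    ScaledEmbedding 16 (ftildeIndex d e P M R π) ftildeFreq (fdeIndex d e P M H R) fdeFreq
      ftildeToFde where
  mapsTo _ hs := ftildeToFde_mem_fdeIndex hd hM hπR hH hs
  injOn s hs s' hs' h := by
    obtain ⟨u, y, k, hu, -, rfl⟩ := exists_eq_of_mem_ftildeIndex hs
    obtain ⟨u', y', k', hu', -, rfl⟩ := exists_eq_of_mem_ftildeIndex hs'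
    rw [ftildeToFde_apply hu, ftildeToFde_apply hu'] at h
    simp only [Prod.mk.injEq] at h
    obtain ⟨hz, rfl, rfl⟩ := h
    obtain rfl : y = y' := by omega
    rfl
  map_freq s hs := by
    obtain ⟨u, y, k, hu, -, rfl⟩ := exists_eq_of_mem_ftildeIndex hs
    exact fdeFreq_ftildeToFde hu y k

lemma Ftilde_eq_expSum (α : ℝ) :
    Ftilde d e P M R π α = expSum (ftildeIndex d e P M R π) ftildeFreq α := by
  classical
  rw [Ftilde, expSum, ftildeIndex, sum_filter, sum_product]
  refine sum_congr rfl fun u hu => ?_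
  rw [sum_product]
  refine sum_congr rfl fun x hx => sum_congr rfl fun y hy => ?_
  by_cases hc : Nat.gcd x u = 1 ∧ Nat.gcd y u = 1 ∧ x ≡ y [MOD u ^ 4] ∧ y < x
  · rw [if_pos hc, if_pos hc]
    have hs : (u, x, y) ∈ ftildeIndex d e P M R π :=
      mem_filter.2 ⟨mem_product.2 ⟨hu, mem_product.2 ⟨hx, hy⟩⟩, hc⟩
    obtain ⟨u, y, k, hu, -, h⟩ := exists_eq_of_mem_ftildeIndex hs
    simp only [Prod.mk.injEq] at h
    obtain ⟨rfl, rfl, rfl⟩ := h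
    rw [ftildeFreq_apply hu]
    push_cast
    congr 1
    field_simp
    ring
  · rw [if_neg hc, if_neg hc]

lemma Fde_eq_expSum (α : ℝ) : Fde d e P M H R α = expSum (fdeIndex d e P M H R) fdeFreq α := by
  rw [Fde, expSum, fdeIndex, sum_product]
  refine sum_congr rfl fun z _ => ?_
  rw [sum_product]
  refine sum_congr rfl fun h _ => sum_congr rfl fun u _ => ?_
  simp only [fdeFreq]
  push_cast
  ring_nf

end Embedding

lemma intervalIntegral_mono_of_nonneg {f g : ℝ → ℝ} {a b : ℝ} (hab : a ≤ b) (hf : 0 ≤ f)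
    (hg : IntervalIntegrable g volume a b) (hfg : f ≤ g) :
    ∫ x in a..b, f x ≤ ∫ x in a..b, g x := by
  rw [intervalIntegral.integral_of_le hab, intervalIntegral.integral_of_le hab]
  exact integral_mono_of_nonneg (.of_forall hf) hg.1 (.of_forall hfg)

section Upsilon

variable {d e π : ℕ} {P M H R : ℝ}

lemma continuous_Ftilde (d e : ℕ) (P M R : ℝ) (π : ℕ) : Continuous (Ftilde d e P M R π) := by
  rw [show Ftilde d e P M R π = expSum _ ftildeFreq from funext Ftilde_eq_expSum]
  exact continuous_expSum _ _

lemma integral_Ftilde_g_le_integral_Fde_g (hd : 0 < d) (hM : 0 < M) (hπ : 2 ≤ π)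
    (hπR : (π : ℝ) ≤ R) (hH : P / M ^ 4 ≤ H) {X Y : ℝ} (hXY : 2 * X ≤ Y) :
    ∫ α in (0 : ℝ)..1, ‖Ftilde d e P M R π α‖ ^ 2 * ‖g α X π‖ ^ 8 ≤
      ∫ α in (0 : ℝ)..1, ‖Fde d e P M H R α ^ 2 * g α Y R ^ 8‖ := by
  have hg := scaledEmbedding_two_mul_smoothA hπ hπR hXY
  have key := ((scaledEmbedding_ftildeToFde (e := e) hd hM hπR hH).prod
    (hg.prod (hg.prod (hg.prod hg)))).integral_sq_norm_expSum_le
  have hL (α : ℝ) : ‖Ftilde d e P M R π α‖ ^ 2 * ‖g α X π‖ ^ 8 =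
      ‖Ftilde d e P M R π α * (g α X π * (g α X π * (g α X π * g α X π)))‖ ^ 2 := by
    simp only [norm_mul]
    ring
  have hR (α : ℝ) : ‖Fde d e P M H R α ^ 2 * g α Y R ^ 8‖ =
      ‖Fde d e P M H R α * (g α Y R * (g α Y R * (g α Y R * g α Y R)))‖ ^ 2 := by
    simp only [norm_mul, norm_pow]
    ring
  simp_rw [hL, hR, Ftilde_eq_expSum, Fde_eq_expSum, g_eq_expSum, expSum_mul]
  exact key

lemma Upsilon_le_sum_integral (hP : 0 ≤ P) (hM : 0 < M) (hd : 0 < d) :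
    Upsilon d e π P M R ≤ ∑ w ∈ smoothA (P / (e * M)) π,
      ∫ α in (0 : ℝ)..1, ‖Ftilde d e P M R π α‖ ^ 2 * ‖g α w π‖ ^ 8 := by
  have hcont (w : ℕ) : Continuous fun α => ‖Ftilde d e P M R π α‖ ^ 2 * ‖g α w π‖ ^ 8 :=
    ((continuous_Ftilde d e P M R π).norm.pow 2).mul ((continuous_g _ _).norm.pow 8)
  rw [Upsilon, ← intervalIntegral.integral_finsetSum fun w _ => (hcont w).intervalIntegrable _ _]
  refine intervalIntegral_mono_of_nonneg zero_le_one (fun α => by positivity)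
    ((continuous_finsetSum _ fun w _ => hcont w).intervalIntegrable _ _) fun α => ?_
  dsimp only
  rw [← mul_sum, show P / (e * M) = P / (d * e) / (M / d) by field_simp]
  gcongr
  exact ftilde_pow_eight_le α (by positivity) (by positivity)

lemma Upsilon_le_card_mul_integral (hP : 0 ≤ P) (hM : 0 < M) (hd : 0 < d) (hπ : 2 ≤ π)
    (hπR : (π : ℝ) ≤ R) :
    Upsilon d e π P M R ≤ #(smoothA (P / (e * M)) π) *
      ∫ α in (0 : ℝ)..1, ‖Fde d e P M (P / M ^ 4) R α ^ 2 * g α (2 * (P / M) / e) R ^ 8‖ := by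
  calc Upsilon d e π P M R
      ≤ ∑ w ∈ smoothA (P / (e * M)) π,
          ∫ α in (0 : ℝ)..1, ‖Ftilde d e P M R π α‖ ^ 2 * ‖g α w π‖ ^ 8 :=
        Upsilon_le_sum_integral hP hM hd
    _ ≤ ∑ _w ∈ smoothA (P / (e * M)) π,
          ∫ α in (0 : ℝ)..1, ‖Fde d e P M (P / M ^ 4) R α ^ 2 * g α (2 * (P / M) / e) R ^ 8‖ :=
        sum_le_sum fun w hw => integral_Ftilde_g_le_integral_Fde_g hd hM hπ hπR le_rfl <| by
          linarith [le_of_mem_smoothA hw, show 2 * (P / M) / e = 2 * (P / (e * M)) by ring]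
    _ = _ := by rw [sum_const, nsmul_eq_mul]

end Upsilon

theorem Upsilon_bound_by_Fde :
    ∀ φ : ℝ, 0 ≤ φ → φ ≤ 1 / 4 → ∀ d e : ℕ, 0 < d → 0 < e → ∀ π : ℕ, π.Prime →
      ∀ ε : ℝ, 0 < ε →
        ∃ η C : ℝ, 0 < η ∧ 0 < C ∧ ∃ P₀ : ℝ, ∀ P R M H Q : ℝ,
          P₀ ≤ P → 1 ≤ R → R ≤ P ^ η → (π : ℝ) ≤ R →
          M = P ^ φ → H = P * M ^ (-4 : ℝ) → Q = P * M ^ (-1 : ℝ) →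
          Upsilon d e π P M R ≤
            C * P ^ ε *
              ∫ α in (0:ℝ)..1, ‖(Fde d e P M H R α) ^ 2 * (g α (2 * Q / e) R) ^ 8‖ := by
  intro φ hφ _ d e hd he π hπ ε hε
  obtain ⟨P₀, hP₀⟩ :=
    ((eventually_card_smoothA_le_rpow π hε).and (eventually_ge_atTop 1)).exists_forall_of_atTop
  refine ⟨1, 1, one_pos, one_pos, P₀, fun P R M H Q hP _ _ hπR hM hH hQ => ?_⟩
  obtain ⟨hcard, hP1⟩ := hP₀ P hP
  have hM1 : 1 ≤ M := hM ▸ Real.one_le_rpow hP1 hφ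
  obtain rfl : H = P / M ^ 4 := by
    rw [hH, Real.rpow_neg (by positivity), div_eq_mul_inv]
    norm_cast
  obtain rfl : Q = P / M := by rw [hQ, Real.rpow_neg_one, div_eq_mul_inv]
  have hW : P / (e * M) ≤ P :=
    div_le_self (by positivity) (one_le_mul_of_one_le_of_one_le (by exact_mod_cast he) hM1)
  calc Upsilon d e π P M R ≤ #(smoothA (P / (e * M)) π) * _ :=
        Upsilon_le_card_mul_integral (by positivity) (by positivity) hd hπ.two_le hπR
    _ ≤ 1 * P ^ ε * _ := by
        rw [one_mul]
        gcongr
        · exact intervalIntegral.integral_nonneg zero_le_one fun _ _ => norm_nonneg _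
        · exact hcard _ hW
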